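/- Let $\mathcal{X}$ be a Banach space, $E \subseteq \mathcal{X}$ convex, and $\hat\phi_0, \dots, \hat\phi_j : \mathcal{X} \to \mathbb{R}$ (no equality constraints, $k = 0$) be Fréchet differentiable at a point $\bar e \in E$ that minimizes $\hat\phi_0$ over $\{e \in E : \hat\phi_i(e) \le 0, i = 1,\dots,j\}$, with $\hat\phi_0(\bar e) = 0$. Let $\mathcal{K} = \{(D\hat\phi_0(\bar e)(x), \dots, D\hat\phi_j(\bar e)(x)) : x \in T_E^\flat(\bar e)\}$ and $Z = (-\infty,0)^{j+1} - \{\lambda(\hat\phi_0(\bar e),\dots,\hat\phi_j(\bar e)) : \lambda > 0\}$. Then $\mathcal{K} \cap Z = \emptyset$, and there exists $(\ell_0,\dots,\ell_j) \in \mathbb{R}^{1+j}\setminus\{0\}$ with $\ell_i \le 0$, $\ell_i \hat\phi_i(\bar e) = 0$, and $\sum_i \ell_i D\hat\phi_i(\bar e)(x) \le 0$ for all $x \in T_E^\flat(\bar e)$. -/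
import Mathlib


open Filter Metric Set MeasureTheory

/-- Kuratowski lower limit of a family of sets `K h` as `h → 0⁺`:
points whose distance to `K h` tends to `0`. -/
noncomputable def liminfSets {X : Type*} [PseudoMetricSpace X] (K : ℝ → Set X) : Set X :=
  {v | Filter.Tendsto (fun h => Metric.infDist v (K h)) (nhdsWithin 0 (Set.Ioi 0)) (nhds 0)}

/-- The adjacent cone `T_K^♭(x) = Liminf_{h→0⁺} (K - x)/h`. -/
noncomputable def adjCone {X : Type*} [NormedAddCommGroup X] [NormedSpace ℝ X]
    (K : Set X) (x : X) : Set X :=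
  liminfSets (fun h => (fun k => h⁻¹ • (k - x)) '' K)

/-- The second-order adjacent subset `T_K^{♭(2)}(x,v) = Liminf_{h→0⁺} (K - x - hv)/h²`. -/
noncomputable def adjCone2 {X : Type*} [NormedAddCommGroup X] [NormedSpace ℝ X]
    (K : Set X) (x v : X) : Set X :=
  liminfSets (fun h => (fun k => (h ^ 2)⁻¹ • (k - x - h • v)) '' K)

section helpers
variable {X : Type*} [NormedAddCommGroup X] [NormedSpace ℝ X]

lemma infDist_comb {S : Set X} (hS : Convex ℝ S) (hne : S.Nonempty) (x y : X) {a b : ℝ}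
    (ha : 0 ≤ a) (hb : 0 ≤ b) (hab : a + b = 1) :
    infDist (a • x + b • y) S ≤ a * infDist x S + b * infDist y S := by
  refine le_of_forall_pos_le_add fun ε hε => ?_
  obtain ⟨x', hx'S, hx'⟩ := (Metric.infDist_lt_iff hne).mp
    (lt_add_of_pos_right (infDist x S) (half_pos hε))
  obtain ⟨y', hy'S, hy'⟩ := (Metric.infDist_lt_iff hne).mp
    (lt_add_of_pos_right (infDist y S) (half_pos hε))
  have hmem : a • x' + b • y' ∈ S := hS hx'S hy'S ha hb hab
  have h1 : infDist (a • x + b • y) S ≤ dist (a • x + b • y) (a • x' + b • y') :=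
    infDist_le_dist_of_mem hmem
  have h2 : dist (a • x + b • y) (a • x' + b • y') ≤ a * dist x x' + b * dist y y' := by
    rw [dist_eq_norm]
    have : a • x + b • y - (a • x' + b • y') = a • (x - x') + b • (y - y') := by module
    rw [this]
    calc ‖a • (x - x') + b • (y - y')‖ ≤ ‖a • (x - x')‖ + ‖b • (y - y')‖ := norm_add_le _ _
      _ = a * dist x x' + b * dist y y' := by
          rw [norm_smul, norm_smul, Real.norm_eq_abs, Real.norm_eq_abs, abs_of_nonneg ha,
            abs_of_nonneg hb, dist_eq_norm, dist_eq_norm]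
  nlinarith [mul_le_mul_of_nonneg_left hx'.le ha, mul_le_mul_of_nonneg_left hy'.le hb,
    infDist_nonneg (x := a • x + b • y) (s := S)]

lemma image_convex {E : Set X} (hE : Convex ℝ E) (c : ℝ) (e0 : X) :
    Convex ℝ ((fun k => c • (k - e0)) '' E) := by
  rintro _ ⟨k1, hk1, rfl⟩ _ ⟨k2, hk2, rfl⟩ a b ha hb hab
  refine ⟨a • k1 + b • k2, hE hk1 hk2 ha hb hab, ?_⟩
  have he0 : e0 = a • e0 + b • e0 := by rw [← add_smul, hab, one_smul]
  simp only []
  rw [show a • k1 + b • k2 - e0 = a • (k1 - e0) + b • (k2 - e0) by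
    nth_rewrite 1 [he0]; module]
  module

lemma zero_mem_adjCone {E : Set X} {ebar : X} (hebar : ebar ∈ E) : (0 : X) ∈ adjCone E ebar := by
  have : ∀ h : ℝ, infDist (0 : X) ((fun k => h⁻¹ • (k - ebar)) '' E) = 0 := fun h =>
    infDist_zero_of_mem ⟨ebar, hebar, by simp⟩
  simp only [adjCone, liminfSets, Set.mem_setOf_eq, this]
  exact tendsto_const_nhds

lemma adjCone_convex {E : Set X} (hE : Convex ℝ E) {ebar : X} (hebar : ebar ∈ E) :
    Convex ℝ (adjCone E ebar) := by
  intro x hx y hy a b ha hb hab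
  have hne : ∀ h : ℝ, ((fun k => h⁻¹ • (k - ebar)) '' E).Nonempty :=
    fun h => ⟨_, ebar, hebar, rfl⟩
  have key : ∀ h : ℝ, infDist (a • x + b • y) ((fun k => h⁻¹ • (k - ebar)) '' E) ≤
      a * infDist x ((fun k => h⁻¹ • (k - ebar)) '' E) +
      b * infDist y ((fun k => h⁻¹ • (k - ebar)) '' E) := fun h =>
    infDist_comb (image_convex hE h⁻¹ ebar) (hne h) x y ha hb hab
  have htend : Tendsto (fun h : ℝ => a * infDist x ((fun k => h⁻¹ • (k - ebar)) '' E) +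
      b * infDist y ((fun k => h⁻¹ • (k - ebar)) '' E)) (nhdsWithin 0 (Set.Ioi 0)) (nhds 0) := by
    have := (hx.const_mul a).add (hy.const_mul b)
    simpa using this
  exact squeeze_zero (fun h => infDist_nonneg) key htend

end helpers

set_option maxHeartbeats 2000000 in
theorem stmt_13 {X : Type*} [NormedAddCommGroup X] [NormedSpace ℝ X] [CompleteSpace X]
    (j : ℕ) (E : Set X) (hE : Convex ℝ E) (ebar : X) (hebar : ebar ∈ E)
    (φ : Fin (j + 1) → X → ℝ) (Dφ : Fin (j + 1) → (X →L[ℝ] ℝ))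
    (hdiff : ∀ i, HasFDerivAt (φ i) (Dφ i) ebar)
    (hfeas : ∀ i : Fin (j + 1), i ≠ 0 → φ i ebar ≤ 0)
    (hmin : ∀ e ∈ E, (∀ i : Fin (j + 1), i ≠ 0 → φ i e ≤ 0) → φ 0 ebar ≤ φ 0 e)
    (hval : φ 0 ebar = 0)
    (K Z : Set (Fin (j + 1) → ℝ))
    (hK : K = {z | ∃ x ∈ adjCone E ebar, z = fun i => Dφ i x})
    (hZ : Z = {z | ∃ w : Fin (j + 1) → ℝ, (∀ i, w i < 0) ∧
        ∃ lam : ℝ, 0 < lam ∧ z = w - lam • fun i => φ i ebar}) :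
    K ∩ Z = ∅ ∧
      ∃ ℓ : Fin (j + 1) → ℝ, ℓ ≠ 0 ∧ (∀ i, ℓ i ≤ 0) ∧ (∀ i, ℓ i * φ i ebar = 0) ∧
        ∀ x ∈ adjCone E ebar, ∑ i, ℓ i * Dφ i x ≤ 0 := by
  set p : Fin (j + 1) → ℝ := fun i => φ i ebar with hp
  have hφneg : ∀ i, φ i ebar ≤ 0 := by
    intro i
    by_cases hi : i = 0
    · rw [hi, hval]
    · exact hfeas i hi
  -- Part 1 : K ∩ Z = ∅
  have hdisj : K ∩ Z = ∅ := by
    rw [Set.eq_empty_iff_forall_notMem]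
    rintro z ⟨hzK, hzZ⟩
    rw [hK] at hzK; rw [hZ] at hzZ
    obtain ⟨x, hx, rfl⟩ := hzK
    obtain ⟨w, hw, lam, hlam, hzw⟩ := hzZ
    have hder : ∀ i, Dφ i x = w i - lam * φ i ebar := by
      intro i
      have := congrFun hzw i
      simpa [hp] using this
    have hfne : (Finset.univ : Finset (Fin (j + 1))).Nonempty := ⟨0, Finset.mem_univ 0⟩
    set c : ℝ := Finset.univ.sup' hfne w with hc
    have hwc : ∀ i, w i ≤ c := fun i => Finset.le_sup' w (Finset.mem_univ i)
    have hcneg : c < 0 := by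
      obtain ⟨i0, -, hi0⟩ := Finset.exists_mem_eq_sup' hfne w
      rw [hc, hi0]; exact hw i0
    set N : ℝ := Finset.univ.sup' hfne (fun i => ‖Dφ i‖) with hN
    have hDN : ∀ i, ‖Dφ i‖ ≤ N := fun i => by
      rw [hN]; exact Finset.le_sup' (fun i => ‖Dφ i‖) (Finset.mem_univ i)
    have hN0 : (0 : ℝ) ≤ N := le_trans (norm_nonneg (Dφ 0)) (hDN 0)
    set B : ℝ := N + ‖x‖ + 1 with hB
    have hB0 : 0 < B := by positivity
    set ε : ℝ := min 1 (-c / (2 * B)) with hεdef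
    have hε0 : 0 < ε := lt_min one_pos (div_pos (by linarith) (by positivity))
    have hε1 : ε ≤ 1 := min_le_left _ _
    have hεB : ε * B ≤ -c / 2 := by
      have h := min_le_right (1 : ℝ) (-c / (2 * B))
      calc ε * B ≤ (-c / (2 * B)) * B := by nlinarith
        _ = -c / 2 := by field_simp
    have hlo : ∀ᶠ x' in nhds ebar, ∀ i, ‖φ i x' - φ i ebar - Dφ i (x' - ebar)‖ ≤ ε * ‖x' - ebar‖ :=
      eventually_all.2 fun i => ((hdiff i).isLittleO).def hε0
    obtain ⟨r, hr0, hr⟩ := Metric.eventually_nhds_iff.mp hlo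
    have hx' : Tendsto (fun h : ℝ => infDist x ((fun k => h⁻¹ • (k - ebar)) '' E))
        (nhdsWithin 0 (Set.Ioi 0)) (nhds 0) := hx
    have e1 : ∀ᶠ h : ℝ in nhdsWithin 0 (Set.Ioi 0), h ∈ Set.Ioi (0 : ℝ) :=
      eventually_mem_nhdsWithin
    have e2 : ∀ᶠ h : ℝ in nhdsWithin 0 (Set.Ioi 0), h < lam⁻¹ :=
      eventually_nhdsWithin_of_eventually_nhds (gt_mem_nhds (by positivity))
    have e3 : ∀ᶠ h : ℝ in nhdsWithin 0 (Set.Ioi 0), h < r / (‖x‖ + 1) :=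
      eventually_nhdsWithin_of_eventually_nhds (gt_mem_nhds (by positivity))
    have e4 : ∀ᶠ h : ℝ in nhdsWithin 0 (Set.Ioi 0),
        infDist x ((fun k => h⁻¹ • (k - ebar)) '' E) < ε := hx'.eventually (gt_mem_nhds hε0)
    obtain ⟨h, hh1, hh2, hh3, hh4⟩ := (e1.and (e2.and (e3.and e4))).exists
    have hhpos : 0 < h := hh1
    have hSne : ((fun k => h⁻¹ • (k - ebar)) '' E).Nonempty := ⟨_, ebar, hebar, rfl⟩
    obtain ⟨y, hyS, hdxy⟩ := (Metric.infDist_lt_iff hSne).mp hh4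
    obtain ⟨e, heE, hey⟩ := hyS
    have heba : e - ebar = h • y := by
      rw [← hey, smul_inv_smul₀ (ne_of_gt hhpos)]
    have hyx : ‖y - x‖ < ε := by rw [← dist_eq_norm, dist_comm]; exact hdxy
    have hynorm : ‖y‖ ≤ ‖x‖ + ε := by
      have h1 := norm_sub_norm_le y x
      linarith
    have henorm : ‖e - ebar‖ ≤ h * (‖x‖ + 1) := by
      rw [heba, norm_smul, Real.norm_eq_abs, abs_of_pos hhpos]
      nlinarith
    have heball : dist e ebar < r := by
      rw [dist_eq_norm]
      calc ‖e - ebar‖ ≤ h * (‖x‖ + 1) := henorm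
        _ < (r / (‖x‖ + 1)) * (‖x‖ + 1) := by
            have hpos : (0 : ℝ) < ‖x‖ + 1 := by positivity
            exact mul_lt_mul_of_pos_right hh3 hpos
        _ = r := by field_simp
    have hlam1 : h * lam < 1 := by
      have := mul_lt_mul_of_pos_right hh2 hlam
      rwa [inv_mul_cancel₀ (ne_of_gt hlam)] at this
    have key : ∀ i, φ i e < 0 := by
      intro i
      have hA1 : φ i e - φ i ebar - (Dφ i) (e - ebar) ≤ ε * ‖e - ebar‖ := by
        have h' := hr heball i
        have h'' := le_abs_self (φ i e - φ i ebar - (Dφ i) (e - ebar))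
        rw [← Real.norm_eq_abs] at h''
        linarith
      have hmapy : (Dφ i) y = (Dφ i) x + (Dφ i) (y - x) := by rw [map_sub]; ring
      have hDe : (Dφ i) (e - ebar) =
          h * (w i - lam * φ i ebar) + h * (Dφ i) (y - x) := by
        rw [heba, _root_.map_smul, smul_eq_mul, hmapy, hder i]; ring
      have hT : (Dφ i) (y - x) ≤ N * ε := by
        have h1 : ‖(Dφ i) (y - x)‖ ≤ ‖Dφ i‖ * ‖y - x‖ := (Dφ i).le_opNorm (y - x)
        have h2 : ‖Dφ i‖ * ‖y - x‖ ≤ N * ε := by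
          apply mul_le_mul (hDN i) hyx.le (norm_nonneg _) hN0
        calc (Dφ i) (y - x) ≤ ‖(Dφ i) (y - x)‖ := le_abs_self _
          _ ≤ N * ε := le_trans h1 h2
      have hεe : ε * ‖e - ebar‖ ≤ ε * (h * (‖x‖ + 1)) :=
        mul_le_mul_of_nonneg_left henorm hε0.le
      have h1 : (1 - h * lam) * φ i ebar ≤ 0 :=
        mul_nonpos_iff.2 (Or.inl ⟨by linarith, hφneg i⟩)
      have h2 : w i + (Dφ i) (y - x) + ε * (‖x‖ + 1) ≤ c / 2 := by
        have expand : ε * B = ε * N + ε * ‖x‖ + ε := by rw [hB]; ring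
        nlinarith [hwc i]
      have h3 : h * (w i + (Dφ i) (y - x) + ε * (‖x‖ + 1)) ≤ h * (c / 2) :=
        mul_le_mul_of_nonneg_left h2 hhpos.le
      have h4 : h * (c / 2) < 0 := mul_neg_of_pos_of_neg hhpos (by linarith)
      linarith [hA1, hDe, hεe, h1, h3, h4]
    have h0 := hmin e heE fun i _ => (key i).le
    rw [hval] at h0
    exact absurd (lt_of_le_of_lt h0 (key 0)) (lt_irrefl 0)
  refine ⟨hdisj, ?_⟩
  -- Part 2 : separation
  have hZopen : IsOpen Z := by
    have hW : IsOpen {w : Fin (j + 1) → ℝ | ∀ i, w i < 0} := by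
      have hWeq : {w : Fin (j + 1) → ℝ | ∀ i, w i < 0} =
          Set.pi Set.univ (fun _ => Set.Iio (0 : ℝ)) := by
        ext w; simp [Set.mem_pi]
      rw [hWeq]
      exact isOpen_set_pi Set.finite_univ fun i _ => isOpen_Iio
    have hZeq : Z = ⋃ lam ∈ Set.Ioi (0 : ℝ),
        (fun z => z + lam • p) ⁻¹' {w : Fin (j + 1) → ℝ | ∀ i, w i < 0} := by
      rw [hZ]; ext z
      simp only [Set.mem_setOf_eq, Set.mem_iUnion, Set.mem_preimage, Set.mem_Ioi]
      constructor
      · rintro ⟨w, hw, lam, hlam, rfl⟩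
        refine ⟨lam, hlam, fun i => ?_⟩
        have : w - lam • p + lam • p = w := by abel
        rw [this]; exact hw i
      · rintro ⟨lam, hlam, hmem⟩
        exact ⟨z + lam • p, hmem, lam, hlam, by abel⟩
    rw [hZeq]
    exact isOpen_biUnion fun lam _ =>
      hW.preimage (continuous_id.add continuous_const)
  have hZconv : Convex ℝ Z := by
    rw [hZ]
    rintro z1 ⟨w1, hw1, l1, hl1, rfl⟩ z2 ⟨w2, hw2, l2, hl2, rfl⟩ a b ha hb hab
    refine ⟨a • w1 + b • w2, ?_, a * l1 + b * l2, ?_, ?_⟩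
    · intro i
      simp only [Pi.add_apply, Pi.smul_apply, smul_eq_mul]
      rcases eq_or_lt_of_le ha with h | h
      · have hb1 : b = 1 := by linarith
        rw [← h, hb1]; simpa using hw2 i
      · nlinarith [hw1 i, hw2 i, mul_neg_of_pos_of_neg h (hw1 i),
          mul_nonpos_iff.2 (Or.inl ⟨hb, (hw2 i).le⟩)]
    · rcases eq_or_lt_of_le ha with h | h
      · have hb1 : b = 1 := by linarith
        rw [← h, hb1]; simpa using hl2
      · nlinarith [mul_pos h hl1, mul_nonneg hb hl2.le]
    · module
  have hKconv : Convex ℝ K := by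
    have hKeq : K = (fun x => fun i => (Dφ i) x) '' adjCone E ebar := by
      rw [hK]; ext z
      constructor
      · rintro ⟨x, hx, rfl⟩; exact ⟨x, hx, rfl⟩
      · rintro ⟨x, hx, rfl⟩; exact ⟨x, hx, rfl⟩
    rw [hKeq]
    have hlin : IsLinearMap ℝ (fun x : X => fun i => (Dφ i) x) :=
      ⟨fun u v => by funext i; simp, fun cc u => by funext i; simp⟩
    exact (adjCone_convex hE hebar).is_linear_image hlin
  set z0 : Fin (j + 1) → ℝ := (fun _ => (-1 : ℝ)) - (1 : ℝ) • p with hz0def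
  have hz0mem : z0 ∈ Z := by
    rw [hZ]; exact ⟨fun _ => (-1 : ℝ), fun i => neg_one_lt_zero, 1, one_pos, rfl⟩
  have h0K : (fun i => (Dφ i) (0 : X)) ∈ K := by
    rw [hK]; exact ⟨0, zero_mem_adjCone hebar, rfl⟩
  have hdisj' : Disjoint Z K := by
    rw [Set.disjoint_iff_inter_eq_empty, Set.inter_comm]; exact hdisj
  obtain ⟨f, u, hfZ, hfK⟩ := geometric_hahn_banach_open hZconv hZopen hKconv hdisj'
  have hu0 : u ≤ 0 := by
    have h := hfK _ h0K
    have hzero : (fun i => (Dφ i) (0 : X)) = (0 : Fin (j + 1) → ℝ) :=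
      funext fun i => ContinuousLinearMap.map_zero (Dφ i)
    rw [hzero, map_zero] at h; exact h
  have hscale : ∀ t : ℝ, 0 < t → t • z0 ∈ Z := by
    intro t ht
    rw [hZ]
    refine ⟨t • (fun _ => (-1 : ℝ)), fun i => ?_, t, ht, ?_⟩
    · simpa using mul_neg_of_pos_of_neg ht neg_one_lt_zero
    · rw [hz0def]; module
  have hu0' : (0 : ℝ) ≤ u := by
    by_contra hu
    push_neg at hu
    have hfz0 : f z0 < u := hfZ z0 hz0mem
    have hfz0' : f z0 < 0 := lt_trans hfz0 hu
    set t := u / (2 * f z0) with htdef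
    have htpos : 0 < t := div_pos_iff.2 (Or.inr ⟨hu, by linarith⟩)
    have h := hfZ _ (hscale t htpos)
    rw [_root_.map_smul, smul_eq_mul] at h
    have ht2 : t * f z0 = u / 2 := by
      rw [htdef]; field_simp [ne_of_lt hfz0']
    rw [ht2] at h
    linarith
  have hu : u = 0 := le_antisymm hu0 hu0'
  have hfZ' : ∀ z ∈ Z, f z < 0 := fun z hz => hu ▸ hfZ z hz
  have hfK' : ∀ k ∈ K, 0 ≤ f k := fun k hk => hu ▸ hfK k hk
  have hfsum : ∀ z : Fin (j + 1) → ℝ, f z = ∑ i, z i * f (Pi.single i 1) := by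
    intro z
    conv_lhs => rw [pi_eq_sum_univ z, map_sum]
    refine Finset.sum_congr rfl fun i _ => ?_
    rw [_root_.map_smul, smul_eq_mul]
    congr 1
    congr 1
    funext k
    simp [Pi.single_apply, eq_comm]
  set ℓ : Fin (j + 1) → ℝ := fun i => -f (Pi.single i 1) with hℓ
  have hfp : (0 : ℝ) ≤ f p := by
    by_contra hfp
    push_neg at hfp
    set A := |f (fun _ => (-1 : ℝ))| with hA
    set lam := (1 + A) / (-f p) with hlamdef
    have hlampos : 0 < lam := div_pos (by positivity) (by linarith)
    have hmem : ((fun _ => (-1 : ℝ)) : Fin (j + 1) → ℝ) - lam • p ∈ Z := by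
      rw [hZ]; exact ⟨_, fun i => neg_one_lt_zero, lam, hlampos, rfl⟩
    have h := hfZ' _ hmem
    rw [map_sub, _root_.map_smul, smul_eq_mul] at h
    have hfpne : f p ≠ 0 := ne_of_lt hfp
    have hlamfp : lam * f p = -(1 + A) := by
      rw [hlamdef]; field_simp [hfpne]
    rw [hlamfp] at h
    have habs := neg_abs_le (f (fun _ => (-1 : ℝ)))
    rw [← hA] at habs
    linarith
  have hsingle : ∀ i, (0 : ℝ) ≤ f (Pi.single i 1) := by
    intro i
    by_contra hs
    push_neg at hs
    set s := f (Pi.single i 1) with hsdef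
    set A := |f (fun _ => (1 : ℝ))| + |f p| + 1 with hA
    have hApos : 0 < A := by positivity
    set t := (-s) / (2 * A) with htdef
    have htpos : 0 < t := div_pos (by linarith) (by linarith)
    have hmem : (-(Pi.single i 1) + (-t) • (fun _ => (1 : ℝ))) - t • p ∈ Z := by
      rw [hZ]
      refine ⟨_, fun i' => ?_, t, htpos, rfl⟩
      simp only [Pi.add_apply, Pi.neg_apply, Pi.smul_apply, smul_eq_mul, mul_one]
      rcases eq_or_ne i' i with rfl | hne
      · rw [Pi.single_eq_same]; linarith
      · rw [Pi.single_eq_of_ne hne]; linarith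
    have hlt := hfZ' _ hmem
    rw [map_sub, map_add, map_neg, _root_.map_smul, _root_.map_smul, smul_eq_mul, smul_eq_mul] at hlt
    have h1 : t * f (fun _ => (1 : ℝ)) ≤ t * |f (fun _ => (1 : ℝ))| :=
      mul_le_mul_of_nonneg_left (le_abs_self _) htpos.le
    have h2 : t * f p ≤ t * |f p| := mul_le_mul_of_nonneg_left (le_abs_self _) htpos.le
    have h4 : t * A = -s / 2 := by
      rw [htdef]; field_simp
    have hexpand : t * A = t * |f (fun _ => (1 : ℝ))| + t * |f p| + t := by rw [hA]; ring
    linarith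
  have hterm : ∀ i, 0 ≤ ℓ i * φ i ebar := by
    intro i
    have := mul_nonneg (hsingle i) (neg_nonneg.2 (hφneg i))
    have hrw : ℓ i * φ i ebar = f (Pi.single i 1) * -(φ i ebar) := by rw [hℓ]; ring
    rw [hrw]; exact this
  have hsumneg : ∑ i, ℓ i * φ i ebar ≤ 0 := by
    have heq : ∑ i, ℓ i * φ i ebar = -(f p) := by
      rw [hfsum p, ← Finset.sum_neg_distrib]
      refine Finset.sum_congr rfl fun i _ => ?_
      rw [hℓ, hp]; ring
    rw [heq]; linarith
  have hsum0 : ∑ i, ℓ i * φ i ebar = 0 :=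
    le_antisymm hsumneg (Finset.sum_nonneg fun i _ => hterm i)
  refine ⟨ℓ, ?_, fun i => neg_nonpos.2 (hsingle i), ?_, ?_⟩
  · intro h0
    have hfzero : ∀ z : Fin (j + 1) → ℝ, f z = 0 := by
      intro z
      rw [hfsum z]
      refine Finset.sum_eq_zero fun i _ => ?_
      have hi : ℓ i = 0 := congrFun h0 i
      have : f (Pi.single i 1) = 0 := by simp only [hℓ] at hi; linarith [hi]
      rw [this, mul_zero]
    have := hfZ' z0 hz0mem
    rw [hfzero z0] at this
    exact lt_irrefl 0 this
  · intro i
    have := (Finset.sum_eq_zero_iff_of_nonneg fun i _ => hterm i).mp hsum0 i (Finset.mem_univ i)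
    exact this
  · intro x hx
    have hk : (fun i => (Dφ i) x) ∈ K := by rw [hK]; exact ⟨x, hx, rfl⟩
    have h0 := hfK' _ hk
    have heq : ∑ i, ℓ i * (Dφ i) x = -(f (fun i => (Dφ i) x)) := by
      rw [hfsum (fun i => (Dφ i) x), ← Finset.sum_neg_distrib]
      refine Finset.sum_congr rfl fun i _ => ?_
      rw [hℓ]; ring
    rw [heq]; linarith
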